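/- arXiv:2004.07954 — 4 statements merged into one kernel-verified Lean document; each statement's English description precedes it below -/
import Mathlib

section
/- If f : ℝ → ℝ is six times continuously differentiable at x, then IS₁(Δx) = f'(x)²Δx² + ((13/12)f''(x)² + (1/3)f'(x)f'''(x))Δx⁴ + O(Δx⁶) as Δx → 0, where IS₁(Δx) = (13/12)(f(x-Δx) - 2f(x) + f(x+Δx))² + (1/4)(f(x-Δx) - f(x+Δx))². -/
open Filter Asymptotics Topology

open Set in
lemma idw_Icc_eq (f : ℝ → ℝ) {x δ ε : ℝ} (hδ : 0 < δ)
    (hsub : Set.Icc x (x+δ) ⊆ Metric.ball x ε)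
    (hf : ContDiffOn ℝ 6 f (Metric.ball x ε)) (k : ℕ) (hk : (k : WithTop ℕ∞) ≤ 6) :
    iteratedDerivWithin k f (Set.Icc x (x+δ)) x = iteratedDeriv k f x := by
  have hts := hf.ftaylorSeriesWithin Metric.isOpen_ball.uniqueDiffOn
  have hxmem : x ∈ Set.Icc x (x+δ) := Set.left_mem_Icc.2 (by linarith)
  have h3 := (hts.mono hsub).eq_iteratedFDerivWithin_of_uniqueDiffOn hk
      (uniqueDiffOn_Icc (by linarith)) hxmem
  have hxball : x ∈ Metric.ball x ε := hsub hxmem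
  have h4 : ftaylorSeriesWithin ℝ f (Metric.ball x ε) x k = iteratedFDeriv ℝ k f x := by
    simp only [ftaylorSeriesWithin]
    exact iteratedFDerivWithin_of_isOpen k Metric.isOpen_ball hxball
  rw [iteratedDerivWithin_eq_iteratedFDerivWithin, iteratedDeriv_eq_iteratedFDeriv, ← h3, h4]

lemma taylor6 (f : ℝ → ℝ) (x : ℝ) (hf : ContDiffAt ℝ 6 f x) :
    (fun Δ : ℝ => f (x + Δ) - (f x + iteratedDeriv 1 f x * Δ + iteratedDeriv 2 f x / 2 * Δ^2
      + iteratedDeriv 3 f x / 6 * Δ^3 + iteratedDeriv 4 f x / 24 * Δ^4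
      + iteratedDeriv 5 f x / 120 * Δ^5))
      =O[𝓝[≥] (0:ℝ)] fun Δ : ℝ => Δ^6 := by
  obtain ⟨u, hu, hfu⟩ := hf.contDiffOn le_rfl (by simp)
  obtain ⟨ε, hε, hball⟩ := Metric.mem_nhds_iff.1 hu
  set δ := ε / 2 with hδdef
  have hδ : 0 < δ := by positivity
  have hsub : Set.Icc x (x+δ) ⊆ Metric.ball x ε := by
    intro y hy
    simp only [Metric.mem_ball, Real.dist_eq, abs_sub_lt_iff]
    constructor <;> [skip; skip] <;> cases' hy with h1 h2 <;> simp only [hδdef] at * <;> linarith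
  have hfball : ContDiffOn ℝ 6 f (Metric.ball x ε) := hfu.mono hball
  have hcont : ContDiffOn ℝ 6 f (Set.Icc x (x+δ)) := hfball.mono hsub
  obtain ⟨C, hC⟩ := exists_taylor_mean_remainder_bound (f := f) (a := x) (b := x + δ) (n := 5) (by linarith)
    (by exact_mod_cast hcont)
  rw [isBigO_iff]
  refine ⟨C, ?_⟩
  have h1 : ∀ᶠ Δ in 𝓝[≥] (0:ℝ), |Δ| < δ := by
    apply eventually_nhdsWithin_of_eventually_nhds
    simpa using eventually_abs_sub_lt (0:ℝ) hδ
  filter_upwards [h1, self_mem_nhdsWithin] with Δ hΔlt (hΔ0 : (0:ℝ) ≤ Δ)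
  have hmem : x + Δ ∈ Set.Icc x (x+δ) := by
    constructor <;> [linarith; skip]
    have := abs_lt.1 hΔlt
    linarith [this.2]
  have hb := hC (x + Δ) hmem
  have heq : taylorWithinEval f 5 (Set.Icc x (x+δ)) x (x + Δ)
      = f x + iteratedDeriv 1 f x * Δ + iteratedDeriv 2 f x / 2 * Δ^2
      + iteratedDeriv 3 f x / 6 * Δ^3 + iteratedDeriv 4 f x / 24 * Δ^4
      + iteratedDeriv 5 f x / 120 * Δ^5 := by
    rw [taylor_within_apply]
    rw [Finset.sum_range_succ, Finset.sum_range_succ, Finset.sum_range_succ,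
      Finset.sum_range_succ, Finset.sum_range_succ, Finset.sum_range_succ, Finset.sum_range_zero]
    rw [idw_Icc_eq f hδ hsub hfball 0 (by norm_num),
      idw_Icc_eq f hδ hsub hfball 1 (by norm_num),
      idw_Icc_eq f hδ hsub hfball 2 (by norm_num),
      idw_Icc_eq f hδ hsub hfball 3 (by norm_num),
      idw_Icc_eq f hδ hsub hfball 4 (by norm_num),
      idw_Icc_eq f hδ hsub hfball 5 (by norm_num)]
    simp only [iteratedDeriv_zero, smul_eq_mul, add_sub_cancel_left]
    norm_num [Nat.factorial]
    ring
  rw [heq] at hb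
  calc ‖f (x + Δ) - (f x + iteratedDeriv 1 f x * Δ + iteratedDeriv 2 f x / 2 * Δ^2
      + iteratedDeriv 3 f x / 6 * Δ^3 + iteratedDeriv 4 f x / 24 * Δ^4
      + iteratedDeriv 5 f x / 120 * Δ^5)‖ ≤ C * (x + Δ - x)^6 := hb
    _ ≤ C * ‖Δ^6‖ := by
        rw [show x + Δ - x = Δ by ring]
        rw [Real.norm_eq_abs, abs_pow, abs_of_nonneg hΔ0]

lemma taylor6_sub (f : ℝ → ℝ) (x : ℝ) (hf : ContDiffAt ℝ 6 f x) :
    (fun Δ : ℝ => f (x - Δ) - (f x - iteratedDeriv 1 f x * Δ + iteratedDeriv 2 f x / 2 * Δ^2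
      - iteratedDeriv 3 f x / 6 * Δ^3 + iteratedDeriv 4 f x / 24 * Δ^4
      - iteratedDeriv 5 f x / 120 * Δ^5))
      =O[𝓝[≥] (0:ℝ)] fun Δ : ℝ => Δ^6 := by
  have hg : ContDiffAt ℝ 6 (fun y => f (2*x - y)) x := by
    have h1 : ContDiffAt ℝ 6 (fun y : ℝ => 2*x - y) x := contDiffAt_const.sub contDiffAt_id
    have h2 : ContDiffAt ℝ 6 f ((fun y : ℝ => 2*x - y) x) := by
      simpa [show 2*x - x = x by ring] using hf
    exact h2.comp x h1
  have hd : ∀ k : ℕ, iteratedDeriv k (fun y => f (2*x - y)) x = (-1:ℝ)^k * iteratedDeriv k f x := by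
    intro k
    have e1 : (fun y : ℝ => f (2*x - y)) = fun y => (fun z => f (2*x + z)) (-y) := by
      funext y; rw [sub_eq_add_neg]
    rw [e1]
    rw [iteratedDeriv_comp_neg k (fun z => f (2*x + z)) x]
    rw [iteratedDeriv_comp_const_add]
    simp only [smul_eq_mul]
    norm_num
    congr 1
    ring
  have h := taylor6 _ x hg
  simp only [hd, show ∀ Δ : ℝ, 2*x - (x + Δ) = x - Δ from fun Δ => by ring,
    show 2*x - x = x from by ring] at h
  exact h.congr (fun Δ => by ring_nf) (fun _ => rfl)

/-- Taylor expansion of the Jiang–Shu indicator IS₁ of the middle sub-stencil: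
    IS₁(Δx) = f'(x)²Δx² + ((13/12)f''(x)² + (1/3)f'(x)f'''(x))Δx⁴ + O(Δx⁶). -/
theorem IS1_taylor (f : ℝ → ℝ) (x : ℝ) (hf : ContDiffAt ℝ 6 f x) :
    (fun Δ : ℝ =>
        ((13/12) * (f (x - Δ) - 2 * f x + f (x + Δ))^2
          + (1/4) * (f (x - Δ) - f (x + Δ))^2)
        - (deriv f x)^2 * Δ^2
        - ((13/12) * (iteratedDeriv 2 f x)^2
            + (1/3) * deriv f x * iteratedDeriv 3 f x) * Δ^4)
      =O[𝓝[>] (0:ℝ)] fun Δ : ℝ => Δ^6 := by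
  have hmono : 𝓝[>] (0:ℝ) ≤ 𝓝[≥] (0:ℝ) := nhdsWithin_mono 0 Set.Ioi_subset_Ici_self
  set d1 := iteratedDeriv 1 f x with hd1
  set d2 := iteratedDeriv 2 f x with hd2
  set d3 := iteratedDeriv 3 f x with hd3
  set d4 := iteratedDeriv 4 f x with hd4
  set d5 := iteratedDeriv 5 f x with hd5
  have hder : deriv f x = d1 := by rw [hd1, iteratedDeriv_one]
  set Rp : ℝ → ℝ := fun Δ => f (x + Δ) - (f x + d1 * Δ + d2 / 2 * Δ^2
      + d3 / 6 * Δ^3 + d4 / 24 * Δ^4 + d5 / 120 * Δ^5) with hRp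
  set Rm : ℝ → ℝ := fun Δ => f (x - Δ) - (f x - d1 * Δ + d2 / 2 * Δ^2
      - d3 / 6 * Δ^3 + d4 / 24 * Δ^4 - d5 / 120 * Δ^5) with hRm
  have hp : Rp =O[𝓝[>] (0:ℝ)] fun Δ : ℝ => Δ^6 := (taylor6 f x hf).mono hmono
  have hm : Rm =O[𝓝[>] (0:ℝ)] fun Δ : ℝ => Δ^6 := (taylor6_sub f x hf).mono hmono
  have hone : (fun Δ : ℝ => Δ^6) =O[𝓝[>] (0:ℝ)] (fun _ : ℝ => (1:ℝ)) := by
    have : Filter.Tendsto (fun Δ : ℝ => Δ^6) (𝓝[>] (0:ℝ)) (𝓝 ((0:ℝ)^6)) :=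
      ((continuous_pow 6).tendsto 0).mono_left nhdsWithin_le_nhds
    exact this.isBigO_one ℝ
  have hpolyO : ∀ (a b c : ℝ), (fun Δ : ℝ => a + b * Δ^2 + c * Δ^4) =O[𝓝[>] (0:ℝ)]
      (fun _ : ℝ => (1:ℝ)) := by
    intro a b c
    have : Filter.Tendsto (fun Δ : ℝ => a + b * Δ^2 + c * Δ^4) (𝓝[>] (0:ℝ))
        (𝓝 (a + b * 0^2 + c * 0^4)) := by
      exact ((by fun_prop : Continuous fun Δ : ℝ => a + b * Δ^2 + c * Δ^4).tendsto 0).mono_left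
        nhdsWithin_le_nhds
    exact this.isBigO_one ℝ
  have hpolyO' : ∀ (a b c : ℝ), (fun Δ : ℝ => a * Δ + b * Δ^3 + c * Δ^5) =O[𝓝[>] (0:ℝ)]
      (fun _ : ℝ => (1:ℝ)) := by
    intro a b c
    have : Filter.Tendsto (fun Δ : ℝ => a * Δ + b * Δ^3 + c * Δ^5) (𝓝[>] (0:ℝ))
        (𝓝 (a * 0 + b * 0^3 + c * 0^5)) := by
      exact ((by fun_prop : Continuous fun Δ : ℝ => a * Δ + b * Δ^3 + c * Δ^5).tendsto 0).mono_left
        nhdsWithin_le_nhds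
    exact this.isBigO_one ℝ
  have key : (fun Δ : ℝ =>
        ((13/12) * (f (x - Δ) - 2 * f x + f (x + Δ))^2
          + (1/4) * (f (x - Δ) - f (x + Δ))^2)
        - (deriv f x)^2 * Δ^2
        - ((13/12) * d2^2 + (1/3) * deriv f x * d3) * Δ^4)
      = fun Δ : ℝ =>
        ((d3^2/36 + d1*d5/60 + 13*d2*d4/72) + (d3*d5/360 + 13*d4^2/1728) * Δ^2
            + (d5^2/14400) * Δ^4) * Δ^6
        + (13/12) * ((Rm Δ + Rp Δ) * ((Rm Δ + Rp Δ) + (2*d2 * Δ^2 + d4/6 * Δ^4)))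
        + (1/4) * ((Rm Δ - Rp Δ) * ((Rm Δ - Rp Δ) + (-(4*d1) * Δ + (-(2*d3)/3) * Δ^3
            + (-d5/30) * Δ^5))) := by
    funext Δ
    rw [hder, hRp, hRm]
    ring
  rw [key]
  have t1 : (fun Δ : ℝ =>
      ((d3^2/36 + d1*d5/60 + 13*d2*d4/72) + (d3*d5/360 + 13*d4^2/1728) * Δ^2
            + (d5^2/14400) * Δ^4) * Δ^6) =O[𝓝[>] (0:ℝ)] fun Δ : ℝ => Δ^6 := by
    simpa using (hpolyO _ _ _).mul (isBigO_refl (fun Δ : ℝ => Δ^6) _)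
  have t2 : (fun Δ : ℝ => (13/12) * ((Rm Δ + Rp Δ) * ((Rm Δ + Rp Δ)
      + (2*d2 * Δ^2 + d4/6 * Δ^4)))) =O[𝓝[>] (0:ℝ)] fun Δ : ℝ => Δ^6 := by
    have factor2 : (fun Δ : ℝ => (Rm Δ + Rp Δ) + (2*d2 * Δ^2 + d4/6 * Δ^4))
        =O[𝓝[>] (0:ℝ)] (fun _ : ℝ => (1:ℝ)) :=
      ((hm.add hp).trans hone).add (by simpa using hpolyO 0 (2*d2) (d4/6))
    simpa using (((hm.add hp).mul factor2).const_mul_left (13/12))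
  have t3 : (fun Δ : ℝ => (1/4) * ((Rm Δ - Rp Δ) * ((Rm Δ - Rp Δ)
      + (-(4*d1) * Δ + (-(2*d3)/3) * Δ^3 + (-d5/30) * Δ^5)))) =O[𝓝[>] (0:ℝ)]
      fun Δ : ℝ => Δ^6 := by
    have factor2 : (fun Δ : ℝ => (Rm Δ - Rp Δ) + (-(4*d1) * Δ + (-(2*d3)/3) * Δ^3
        + (-d5/30) * Δ^5)) =O[𝓝[>] (0:ℝ)] (fun _ : ℝ => (1:ℝ)) :=
      ((hm.sub hp).trans hone).add (hpolyO' _ _ _)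
    simpa using (((hm.sub hp).mul factor2).const_mul_left (1/4))
  exact (t1.add t2).add t3
end

section
/- If f : ℝ → ℝ is six times continuously differentiable at x, then the global smoothness indicator τ₅(Δx) = |IS₂(Δx) - IS₀(Δx)| satisfies τ₅(Δx) = |(13/3)f''(x)f'''(x) - f'(x)f⁽⁴⁾(x)|Δx⁵ + O(Δx⁶) as Δx → 0. -/
open Filter Asymptotics Topology Finset Nat

/-!
Write `f (x + h) = p h + O(h⁶)` with `p` the Taylor polynomial of degree 5. Both indicators are
quadratic forms in stencil values that stay bounded as `Δ → 0`, so replacing `f` by `p` changes them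
by `O(Δ⁶)`. For the polynomial, `IS₂ - IS₀` is an odd polynomial in `Δ` whose `Δ⁵` coefficient is
`(13/3) f'' f''' - f' f⁽⁴⁾`, and the rest is `O(Δ⁷)`. Taking absolute values costs nothing since
`||a| - |b|| ≤ |a - b|`.
-/

theorem Asymptotics.IsBigO.sq_sub_sq {α R : Type*} [NormedCommRing R] [NormMulClass R]
    {l : Filter α} {u v g : α → R} (h : (fun a => u a - v a) =O[l] g)
    (hu : u =O[l] fun _ => (1 : R)) (hv : v =O[l] fun _ => (1 : R)) : (fun a => u a ^ 2 - v a ^ 2) =O[l] g :=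
  (h.mul (hu.add hv)).congr (fun a => by ring) fun a => mul_one _

theorem Asymptotics.IsBigO.comp_const_mul_pow {E : Type*} [NormedAddCommGroup E] {r : ℝ → E}
    {n : ℕ} (hr : r =O[𝓝 0] fun h => h ^ n) (k : ℝ) :
    (fun h => r (k * h)) =O[𝓝 0] fun h => h ^ n := by
  have htend : Tendsto (fun h => k * h) (𝓝 0) (𝓝 0) := by
    simpa using (tendsto_id (x := 𝓝 (0 : ℝ))).const_mul k
  refine (hr.comp_tendsto htend).trans ?_
  simpa [Function.comp_def, mul_pow] using
    (isBigO_refl (fun h : ℝ => h ^ n) _).const_mul_left (k ^ n)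

theorem Asymptotics.IsBigO.abs_sub_abs {α F : Type*} [Norm F] {l : Filter α} {u v : α → ℝ}
    {g : α → F} (h : (fun a => u a - v a) =O[l] g) : (fun a => |u a| - |v a|) =O[l] g :=
  (isBigO_of_le l fun a => by
    simpa only [Real.norm_eq_abs] using abs_abs_sub_abs_le_abs_sub (u a) (v a)).trans h

theorem isLittleO_mul_pow_of_continuousAt {q : ℝ → ℝ} {m n : ℕ} (hq : ContinuousAt q 0)
    (hnm : n < m) : (fun h => q h * h ^ m) =o[𝓝 0] fun h => h ^ n :=
  ((hq.tendsto.isBigO_one ℝ).mul_isLittleO (isLittleO_pow_pow hnm)).congr_right fun _ => one_mul _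

theorem ContDiffAt.isBigO_sub_taylor {f : ℝ → ℝ} {x : ℝ} {n : ℕ}
    (hf : ContDiffAt ℝ (n + 1) f x) :
    (fun h => f (x + h) - ∑ k ∈ range (n + 1), iteratedDeriv k f x / k ! * h ^ k)
      =O[𝓝 0] fun h => h ^ (n + 1) := by
  obtain ⟨u, hu, hfu⟩ := hf.contDiffOn le_rfl (by simp)
  obtain ⟨ε, hε, hball⟩ := Metric.mem_nhds_iff.1 hu
  have hx : x ∈ Metric.ball x ε := Metric.mem_ball_self hε
  have hlo := taylor_isLittleO (convex_ball x ε) hx (n := n + 1) (by exact_mod_cast hfu.mono hball)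
  rw [Metric.isOpen_ball.nhdsWithin_eq hx] at hlo
  have hT : ∀ m y, taylorWithinEval f m (Metric.ball x ε) x y
      = ∑ k ∈ range (m + 1), iteratedDeriv k f x / k ! * (y - x) ^ k := fun m y => by
    simp only [taylor_within_apply, iteratedDerivWithin_of_isOpen Metric.isOpen_ball hx,
      smul_eq_mul]
    exact sum_congr rfl fun k _ => by ring
  have hsplit : (fun y => f y - ∑ k ∈ range (n + 1), iteratedDeriv k f x / k ! * (y - x) ^ k)
      = fun y => (f y - taylorWithinEval f (n + 1) (Metric.ball x ε) x y)
        + iteratedDeriv (n + 1) f x / (n + 1)! * (y - x) ^ (n + 1) := by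
    funext y
    rw [hT, sum_range_succ _ (n + 1)]
    ring
  have hO : (fun y => f y - ∑ k ∈ range (n + 1), iteratedDeriv k f x / k ! * (y - x) ^ k)
      =O[𝓝 x] fun y => (y - x) ^ (n + 1) := by
    rw [hsplit]
    exact hlo.isBigO.add ((isBigO_refl _ _).const_mul_left _)
  have htend : Tendsto (fun h => x + h) (𝓝 0) (𝓝 x) := by
    simpa using (tendsto_const_nhds (x := x)).add (tendsto_id (x := 𝓝 (0:ℝ)))
  simpa [Function.comp_def] using hO.comp_tendsto htend

/-- With `g = f (x + ·)`, `IS₂(Δ) = smoothnessIndicator g Δ` and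
`IS₀(Δ) = smoothnessIndicator g (-Δ)`. -/
noncomputable def smoothnessIndicator (g : ℝ → ℝ) (Δ : ℝ) : ℝ :=
  13 / 12 * (g 0 - 2 * g Δ + g (2 * Δ)) ^ 2 + 1 / 4 * (3 * g 0 - 4 * g Δ + g (2 * Δ)) ^ 2

theorem smoothnessIndicator_sub_isBigO {g p : ℝ → ℝ} {n : ℕ} (hg : ContinuousAt g 0)
    (hp : ContinuousAt p 0) (h0 : g 0 = p 0) (hgp : (fun h => g h - p h) =O[𝓝 0] fun h => h ^ n) :
    (fun Δ => smoothnessIndicator g Δ - smoothnessIndicator p Δ) =O[𝓝 0] fun Δ => Δ ^ n := by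
  have hbdd : ∀ q : ℝ → ℝ, ContinuousAt q 0 → ∀ a b : ℝ,
      (fun Δ => a * q 0 + b * q Δ + q (2 * Δ)) =O[𝓝 0] fun _ => (1 : ℝ) := by
    intro q hq a b
    have hq2 : ContinuousAt (fun Δ => q (2 * Δ)) 0 :=
      hq.comp_of_eq (continuous_const_mul 2).continuousAt (mul_zero 2)
    exact (continuousAt_const.add (continuousAt_const.mul hq) |>.add hq2).tendsto.isBigO_one ℝ
  have hdiff : ∀ a b : ℝ, (fun Δ => (a * g 0 + b * g Δ + g (2 * Δ))
      - (a * p 0 + b * p Δ + p (2 * Δ))) =O[𝓝 0] fun Δ => Δ ^ n := fun a b =>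
    ((hgp.const_mul_left b).add (hgp.comp_const_mul_pow 2)).congr_left fun Δ => by rw [h0]; ring
  have hA := (hdiff 1 (-2)).sq_sub_sq (hbdd g hg 1 (-2)) (hbdd p hp 1 (-2))
  have hB := (hdiff 3 (-4)).sq_sub_sq (hbdd g hg 3 (-4)) (hbdd p hp 3 (-4))
  refine ((hA.const_mul_left (13 / 12)).add (hB.const_mul_left (1 / 4))).congr_left fun Δ => ?_
  simp only [smoothnessIndicator]
  ring

theorem smoothnessIndicator_quintic_sub_neg {p : ℝ → ℝ} (a : ℕ → ℝ)
    (hp : ∀ h, p h = ∑ k ∈ range 6, a k / k ! * h ^ k) (Δ : ℝ) :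
    smoothnessIndicator p Δ - smoothnessIndicator p (-Δ)
      = (13 / 3 * a 2 * a 3 - a 1 * a 4) * Δ ^ 5
        + (13 / 12 * a 2 * a 5 + 103 / 36 * a 3 * a 4 + 539 / 720 * a 4 * a 5 * Δ ^ 2) * Δ ^ 7 := by
  simp only [smoothnessIndicator, hp, sum_range_succ, sum_range_zero, factorial]
  push_cast
  ring

/-- Taylor expansion of the WENO-Z global smoothness indicator τ₅ = |IS₂ - IS₀|:
    τ₅(Δx) = |(13/3)f''f''' - f'f⁽⁴⁾|Δx⁵ + O(Δx⁶) as Δx → 0⁺. -/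
theorem tau5_taylor (f : ℝ → ℝ) (x : ℝ) (hf : ContDiffAt ℝ 6 f x) :
    (fun Δ : ℝ =>
        |((13/12) * (f x - 2 * f (x + Δ) + f (x + 2*Δ))^2
            + (1/4) * (3 * f x - 4 * f (x + Δ) + f (x + 2*Δ))^2)
          - ((13/12) * (f (x - 2*Δ) - 2 * f (x - Δ) + f x)^2
            + (1/4) * (f (x - 2*Δ) - 4 * f (x - Δ) + 3 * f x)^2)|
        - |(13/3) * iteratedDeriv 2 f x * iteratedDeriv 3 f x
            - deriv f x * iteratedDeriv 4 f x| * Δ^5)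
      =O[𝓝[>] (0:ℝ)] fun Δ : ℝ => Δ^6 := by
  set g : ℝ → ℝ := fun h => f (x + h)
  set p : ℝ → ℝ := fun h => ∑ k ∈ range 6, iteratedDeriv k f x / k ! * h ^ k
  have hgp : (fun h => g h - p h) =O[𝓝 0] fun h => h ^ 6 :=
    ContDiffAt.isBigO_sub_taylor (n := 5) hf
  have hg : ContinuousAt g 0 :=
    hf.continuousAt.comp_of_eq (continuous_const_add x).continuousAt (add_zero x)
  have hp : ContinuousAt p 0 := by fun_prop
  have hstab := smoothnessIndicator_sub_isBigO hg hp (by simp [g, p, sum_range_succ]) hgp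
  set c := 13/3 * iteratedDeriv 2 f x * iteratedDeriv 3 f x - deriv f x * iteratedDeriv 4 f x
    with hc
  have hpoly : (fun Δ => smoothnessIndicator p Δ - smoothnessIndicator p (-Δ) - c * Δ ^ 5)
      =O[𝓝 0] fun Δ => Δ ^ 6 := by
    simp_rw [hc, smoothnessIndicator_quintic_sub_neg (p := p) (fun k => iteratedDeriv k f x)
      (fun _ => rfl), iteratedDeriv_one, add_sub_cancel_left]
    exact (isLittleO_mul_pow_of_continuousAt (by fun_prop) (by norm_num)).isBigO
  have hodd : (fun Δ => smoothnessIndicator g Δ - smoothnessIndicator g (-Δ) - c * Δ ^ 5)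
      =O[𝓝 0] fun Δ => Δ ^ 6 :=
    ((hstab.sub (by simpa using hstab.comp_const_mul_pow (-1))).add hpoly).congr_left
      fun Δ => by ring
  refine (hodd.mono nhdsWithin_le_nhds).abs_sub_abs.congr' ?_ EventuallyEq.rfl
  filter_upwards [self_mem_nhdsWithin] with Δ hΔ
  rw [abs_mul, abs_pow, abs_of_pos (show 0 < Δ from hΔ)]
  simp only [smoothnessIndicator, g, add_zero, mul_neg, ← sub_eq_add_neg]
  congr 2
  ring
end

section
/- For τ > 0, IS₂ > 0 fixed and IS₀ > 10·IS₂, with C = A·((IS₀ + IS₂ - τ)/τ)² where τ = IS₀ - IS₂ and A = 10, the WENO-ZN ratio (C + τ₈/IS₀)/(C + τ₈/IS₂) is at most the WENO-Z ratio (1 + τ/IS₀)/(1 + τ/IS₂) whenever τ₈ ≥ τ/2 and τ₈ ≤ 3τ, in the limiting regime IS₀/IS₂ → ∞ (both ratios tend to positive limits and the WENO-ZN limit is smaller). -/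
/-!
Writing `s = 1/IS₀ ≤ t = 1/IS₂`, cross-multiplying the two ratios leaves
`(τ₈ - C·τ)(t - s) ≥ 0`, so the comparison reduces to `C·τ ≤ τ₈`. Since `τ ≥ 9·IS₂`,
`C·τ = 40·IS₂²/τ ≤ 40τ/81 < τ/2 ≤ τ₈`.
-/

lemma div_add_div_le_div_add_div {C a b x y : ℝ} (hy : 0 < y) (hyx : y ≤ x)
    (hCb : C * b ≤ a) (hCa : 0 < C + a / y) (hb : 0 < 1 + b / y) :
    (C + a / x) / (C + a / y) ≤ (1 + b / x) / (1 + b / y) := by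
  have hxy : 1 / x ≤ 1 / y := one_div_le_one_div_of_le hy hyx
  have key : 0 ≤ (a - C * b) * (1 / y - 1 / x) :=
    mul_nonneg (sub_nonneg.2 hCb) (sub_nonneg.2 hxy)
  rw [div_le_div_iff₀ hCa hb]
  linear_combination key

lemma ten_mul_sq_two_mul_div_mul_le_half {y τ : ℝ} (hy : 0 < y) (h : 9 * y ≤ τ) :
    10 * (2 * y / τ) ^ 2 * τ ≤ τ / 2 := by
  have hτ : 0 < τ := by linarith
  have hCτ : 10 * (2 * y / τ) ^ 2 * τ = 40 * y ^ 2 / τ := by field_simp; ring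
  rw [hCτ, div_le_div_iff₀ hτ two_pos]
  nlinarith

theorem wenoZN_ratio_le_wenoZ_ratio_general (IS0 IS2 τ8 : ℝ) (hIS2 : 0 < IS2)
    (h10 : 10 * IS2 ≤ IS0)
    (hτ8l : (IS0 - IS2) / 2 ≤ τ8) :
    let τ := IS0 - IS2
    let C := 10 * (2 * IS2 / τ)^2
    (C + τ8 / IS0) / (C + τ8 / IS2) ≤ (1 + τ / IS0) / (1 + τ / IS2) := by
  intro τ C
  have hτ : 9 * IS2 ≤ τ := by simp only [τ]; linarith
  have hCτ : C * τ ≤ τ8 := (ten_mul_sq_two_mul_div_mul_le_half hIS2 hτ).trans hτ8l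
  have hτ8 : 0 < τ8 := by linarith
  have hτpos : 0 < τ := by linarith
  exact div_add_div_le_div_add_div hIS2 (by linarith) hCτ (by positivity) (by positivity)

/-- Comparison of the contribution of a discontinuous sub-stencil: for
    IS₀ ≥ 10·IS₂ > 0, τ = IS₀ - IS₂, C = 10·(2IS₂/τ)², and any τ₈ with
    τ/2 ≤ τ₈ ≤ 3τ, the WENO-ZN ratio is at most the WENO-Z ratio. -/
theorem wenoZN_ratio_le_wenoZ_ratio (IS0 IS2 τ8 : ℝ) (hIS2 : 0 < IS2)
    (h10 : 10 * IS2 ≤ IS0)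
    (hτ8l : (IS0 - IS2) / 2 ≤ τ8) (hτ8u : τ8 ≤ 3 * (IS0 - IS2)) :
    let τ := IS0 - IS2
    let C := 10 * (2 * IS2 / τ)^2
    (C + τ8 / IS0) / (C + τ8 / IS2) ≤ (1 + τ / IS0) / (1 + τ / IS2) :=
  wenoZN_ratio_le_wenoZ_ratio_general IS0 IS2 τ8 hIS2 h10 hτ8l
end

section
/- Taylor asymmetry of the outer smoothness indicators: for f C⁶ near x, IS₂(Δx) - IS₀(Δx) = ((13/3)f''(x)f'''(x) - f'(x)f⁽⁴⁾(x))Δx⁵ + O(Δx⁶), so that the fifth-order terms of IS₀ and IS₂ are exactly opposite: IS₀ has Δx⁵-coefficient -(13/6)f''f''' + (1/2)f'f⁽⁴⁾ and IS₂ has +(13/6)f''f''' - (1/2)f'f⁽⁴⁾, while their expansions agree through order Δx⁴. -/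
/-!
With `f_j = f (x + jΔ)`, the right indicator is `IS₂ = 13/12 A² + 1/4 B²`, where by Taylor
`A = f₀ - 2f₁ + f₂ = f''Δ² + f'''Δ³ + O(Δ⁴)` and
`B = 3f₀ - 4f₁ + f₂ = -2f'Δ + 2/3 f'''Δ³ + 1/2 f⁽⁴⁾Δ⁴ + O(Δ⁵)`.
Since `A = O(Δ²)` and `B = O(Δ)`, squaring loses no order, so expanding the squares of the
polynomial parts gives `IS₂` up to `O(Δ⁶)`. The left indicator is `IS₀(Δ) = IS₂(-Δ)`,
which keeps the even-order terms and flips the sign of the `Δ⁵` term.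
-/

open Filter Asymptotics Topology

open Nat in
theorem taylor_isBigO_of_contDiffAt {E : Type*} [NormedAddCommGroup E] [NormedSpace ℝ E]
    {f : ℝ → E} {x : ℝ} {n : ℕ} (hf : ContDiffAt ℝ (n + 1) f x) :
    (fun h => f (x + h) - ∑ k ∈ Finset.range (n + 1), (h ^ k / k !) • iteratedDeriv k f x)
      =O[𝓝 0] fun h => h ^ (n + 1) := by
  obtain ⟨u, hu, hfu⟩ := hf.contDiffOn le_rfl (by simp)
  obtain ⟨ε, hε, hball⟩ := Metric.mem_nhds_iff.1 hu
  set s := Metric.ball x ε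
  have hcoeff : ∀ k ≤ n + 1, iteratedDerivWithin k f s x = iteratedDeriv k f x :=
    fun k hk => iteratedDerivWithin_eq_iteratedDeriv Metric.isOpen_ball.uniqueDiffOn
      (hf.of_le (by exact_mod_cast hk)) (Metric.mem_ball_self hε)
  have hlittle := taylor_isLittleO (n := n + 1) (convex_ball x ε) (Metric.mem_ball_self hε)
    (by exact_mod_cast hfu.mono hball)
  rw [nhdsWithin_eq_nhds.2 (Metric.ball_mem_nhds x hε)] at hlittle
  have htop : (fun y => ((y - x) ^ (n + 1) / (n + 1)!) • iteratedDeriv (n + 1) f x)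
      =O[𝓝 x] fun y => (y - x) ^ (n + 1) :=
    .of_bound (‖iteratedDeriv (n + 1) f x‖ / (n + 1)!) <| .of_forall fun y => by
      rw [norm_smul, norm_div, Real.norm_natCast]
      exact le_of_eq (by ring)
  have hT : (fun y => f y - ∑ k ∈ Finset.range (n + 1), ((y - x) ^ k / k !) •
      iteratedDeriv k f x) =O[𝓝 x] fun y => (y - x) ^ (n + 1) := by
    refine (hlittle.isBigO.add htop).congr (fun y => ?_) fun _ => rfl
    rw [taylor_within_apply, Finset.sum_range_succ _ (n + 1), hcoeff _ le_rfl,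
      Finset.sum_congr rfl fun k hk => by rw [hcoeff k (Finset.mem_range.1 hk).le]]
    simp only [div_eq_inv_mul]
    abel
  have hshift : Tendsto (x + ·) (𝓝 0) (𝓝 x) := by
    simpa using (continuous_const_add x).tendsto 0
  simpa [Function.comp_def] using hT.comp_tendsto hshift

namespace Asymptotics

theorem IsBigO.comp_const_mul {E : Type*} [Norm E] {u : ℝ → E} {m : ℕ}
    (hu : u =O[𝓝 0] fun h => h ^ m) (c : ℝ) :
    (fun Δ => u (c * Δ)) =O[𝓝 0] fun Δ => Δ ^ m := by
  have hscale : Tendsto (c * ·) (𝓝 0) (𝓝 0) := by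
    simpa using (continuous_const_mul c).tendsto 0
  refine (hu.comp_tendsto hscale).trans ?_
  simpa [Function.comp_def, mul_pow] using
    (isBigO_refl (fun Δ : ℝ => Δ ^ m) _).const_mul_left (c ^ m)

theorem IsBigO.sq_sub_sq_s15 {α R S : Type*} [SeminormedCommRing R]
    [NormedRing S] [NormMulClass S] {l : Filter α} {u p : α → R} {g k : α → S}
    (hu : (fun a => u a - p a) =O[l] g) (hp : p =O[l] k) (hg : g =O[l] k) :
    (fun a => u a ^ 2 - p a ^ 2) =O[l] fun a => g a * k a :=
  (hu.mul ((hu.trans hg).add (hp.const_mul_left 2))).congr_left fun a => by ring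

end Asymptotics

theorem isBigO_pow_mul_of_continuous {q : ℝ → ℝ} (hq : Continuous q) (m : ℕ) :
    (fun Δ => Δ ^ m * q Δ) =O[𝓝 0] fun Δ => Δ ^ m :=
  ((isBigO_refl _ _).mul ((hq.tendsto 0).isBigO_one ℝ)).congr_right fun _ => mul_one _

section Stencil

variable {f : ℝ → ℝ} {x : ℝ}

theorem secondForwardDiff_sub_isBigO (hf : ContDiffAt ℝ 4 f x) :
    (fun Δ => f x - 2 * f (x + Δ) + f (x + 2 * Δ)
        - (iteratedDeriv 2 f x * Δ ^ 2 + iteratedDeriv 3 f x * Δ ^ 3))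
      =O[𝓝 0] fun Δ => Δ ^ 4 := by
  have hT := taylor_isBigO_of_contDiffAt (n := 3) hf
  refine ((hT.comp_const_mul 2).sub ((hT.comp_const_mul 1).const_mul_left 2)).congr
    (fun Δ => ?_) fun _ => rfl
  simp only [Finset.sum_range_succ, Finset.sum_range_zero, Nat.factorial, one_mul,
    iteratedDeriv_zero, iteratedDeriv_one, smul_eq_mul]
  push_cast
  ring

theorem threePointForwardDiff_sub_isBigO (hf : ContDiffAt ℝ 5 f x) :
    (fun Δ => 3 * f x - 4 * f (x + Δ) + f (x + 2 * Δ)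
        - (-2 * deriv f x * Δ + 2 / 3 * iteratedDeriv 3 f x * Δ ^ 3
          + 1 / 2 * iteratedDeriv 4 f x * Δ ^ 4))
      =O[𝓝 0] fun Δ => Δ ^ 5 := by
  have hT := taylor_isBigO_of_contDiffAt (n := 4) hf
  refine ((hT.comp_const_mul 2).sub ((hT.comp_const_mul 1).const_mul_left 4)).congr
    (fun Δ => ?_) fun _ => rfl
  simp only [Finset.sum_range_succ, Finset.sum_range_zero, Nat.factorial, one_mul,
    iteratedDeriv_zero, iteratedDeriv_one, smul_eq_mul]
  push_cast
  ring

end Stencil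

noncomputable def jiangShuIndicator (f : ℝ → ℝ) (x Δ : ℝ) : ℝ :=
  13 / 12 * (f x - 2 * f (x + Δ) + f (x + 2 * Δ)) ^ 2
    + 1 / 4 * (3 * f x - 4 * f (x + Δ) + f (x + 2 * Δ)) ^ 2

theorem jiangShuIndicator_sub_expansion_isBigO {f : ℝ → ℝ} {x : ℝ}
    (hf : ContDiffAt ℝ 5 f x) :
    (fun Δ => jiangShuIndicator f x Δ
        - (deriv f x ^ 2 * Δ ^ 2
          + (13 / 12 * iteratedDeriv 2 f x ^ 2 - 2 / 3 * deriv f x * iteratedDeriv 3 f x) * Δ ^ 4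
          + (13 / 6 * iteratedDeriv 2 f x * iteratedDeriv 3 f x
            - 1 / 2 * deriv f x * iteratedDeriv 4 f x) * Δ ^ 5))
      =O[𝓝 0] fun Δ => Δ ^ 6 := by
  set d₁ := deriv f x
  set d₂ := iteratedDeriv 2 f x
  set d₃ := iteratedDeriv 3 f x
  set d₄ := iteratedDeriv 4 f x
  have hA := (secondForwardDiff_sub_isBigO (hf.of_le (by norm_num))).sq_sub_sq_s15
    (isBigO_pow_mul_of_continuous (q := fun Δ => d₂ + d₃ * Δ) (by fun_prop) 2 |>.congr_left
      fun Δ => by ring)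
    (isBigO_pow_mul_of_continuous (q := fun Δ => Δ ^ 2) (by fun_prop) 2 |>.congr_left
      fun Δ => by ring)
    |>.congr_right fun Δ => show Δ ^ 4 * Δ ^ 2 = Δ ^ 6 by ring
  have hB := (threePointForwardDiff_sub_isBigO hf).sq_sub_sq_s15
    (isBigO_pow_mul_of_continuous
      (q := fun Δ => -2 * d₁ + 2 / 3 * d₃ * Δ ^ 2 + 1 / 2 * d₄ * Δ ^ 3) (by fun_prop) 1
      |>.congr_left fun Δ => by ring)
    (isBigO_pow_mul_of_continuous (q := fun Δ => Δ ^ 4) (by fun_prop) 1 |>.congr_left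
      fun Δ => by ring)
    |>.congr_right fun Δ => show Δ ^ 5 * Δ ^ 1 = Δ ^ 6 by ring
  -- the squared polynomial parts overshoot the expansion only in degrees 6 to 8
  have hR := isBigO_pow_mul_of_continuous
    (q := fun Δ => 43 / 36 * d₃ ^ 2 + 1 / 6 * d₃ * d₄ * Δ + 1 / 16 * d₄ ^ 2 * Δ ^ 2)
    (by fun_prop) 6
  refine (((hA.const_mul_left (13 / 12)).add (hB.const_mul_left (1 / 4))).add hR).congr_left
    fun Δ => ?_
  simp only [jiangShuIndicator, d₁, d₂, d₃, d₄]
  ring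

theorem jiangShuIndicator_neg (f : ℝ → ℝ) (x Δ : ℝ) :
    jiangShuIndicator f x (-Δ) =
      13 / 12 * (f (x - 2 * Δ) - 2 * f (x - Δ) + f x) ^ 2
        + 1 / 4 * (f (x - 2 * Δ) - 4 * f (x - Δ) + 3 * f x) ^ 2 := by
  simp only [jiangShuIndicator, mul_neg, ← sub_eq_add_neg]
  ring

/-- Taylor asymmetry of the outer Jiang–Shu indicators: IS₀ and IS₂ share the
    common expansion f'²Δx² + ((13/12)f''² - (2/3)f'f''')Δx⁴, their Δx⁵
    coefficients are exactly opposite (∓((13/6)f''f''' - (1/2)f'f⁽⁴⁾)), and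
    hence IS₂ - IS₀ = ((13/3)f''f''' - f'f⁽⁴⁾)Δx⁵ + O(Δx⁶). -/
theorem IS0_IS2_taylor_asymmetry (f : ℝ → ℝ) (x : ℝ) (hf : ContDiffAt ℝ 6 f x) :
    ((fun Δ : ℝ =>
        ((13/12) * (f (x - 2*Δ) - 2 * f (x - Δ) + f x)^2
          + (1/4) * (f (x - 2*Δ) - 4 * f (x - Δ) + 3 * f x)^2)
        - ((deriv f x)^2 * Δ^2
            + ((13/12) * (iteratedDeriv 2 f x)^2
                - (2/3) * deriv f x * iteratedDeriv 3 f x) * Δ^4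
            + (-(13/6) * iteratedDeriv 2 f x * iteratedDeriv 3 f x
                + (1/2) * deriv f x * iteratedDeriv 4 f x) * Δ^5))
      =O[𝓝[>] (0:ℝ)] fun Δ : ℝ => Δ^6) ∧
    ((fun Δ : ℝ =>
        ((13/12) * (f x - 2 * f (x + Δ) + f (x + 2*Δ))^2
          + (1/4) * (3 * f x - 4 * f (x + Δ) + f (x + 2*Δ))^2)
        - ((deriv f x)^2 * Δ^2
            + ((13/12) * (iteratedDeriv 2 f x)^2
                - (2/3) * deriv f x * iteratedDeriv 3 f x) * Δ^4
            + ((13/6) * iteratedDeriv 2 f x * iteratedDeriv 3 f x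
                - (1/2) * deriv f x * iteratedDeriv 4 f x) * Δ^5))
      =O[𝓝[>] (0:ℝ)] fun Δ : ℝ => Δ^6) ∧
    ((fun Δ : ℝ =>
        (((13/12) * (f x - 2 * f (x + Δ) + f (x + 2*Δ))^2
            + (1/4) * (3 * f x - 4 * f (x + Δ) + f (x + 2*Δ))^2)
          - ((13/12) * (f (x - 2*Δ) - 2 * f (x - Δ) + f x)^2
            + (1/4) * (f (x - 2*Δ) - 4 * f (x - Δ) + 3 * f x)^2))
        - ((13/3) * iteratedDeriv 2 f x * iteratedDeriv 3 f x
            - deriv f x * iteratedDeriv 4 f x) * Δ^5)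
      =O[𝓝[>] (0:ℝ)] fun Δ : ℝ => Δ^6) := by
  have hright := jiangShuIndicator_sub_expansion_isBigO (hf.of_le (by norm_num))
  have hleft := hright.comp_const_mul (-1)
  simp only [neg_one_mul, jiangShuIndicator_neg] at hleft
  have hIS₂ := hright.mono (nhdsWithin_le_nhds (s := Set.Ioi 0))
  have hIS₀ := hleft.mono (nhdsWithin_le_nhds (s := Set.Ioi 0))
  exact ⟨hIS₀.congr_left fun Δ => by ring, hIS₂,
    (hIS₂.sub hIS₀).congr_left fun Δ => by simp only [jiangShuIndicator]; ring⟩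
end
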